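/- arXiv:2010.14715 — 2 statements merged into one kernel-verified Lean document; each statement's English description precedes it below -/
import Mathlib

section
/- (Convergence to types for scaling actions.) Let (𝕏, d) be a complete separable metric space with a distinguished point 0, equipped with a scaling action (T_a)_{a>0}. Let ξ_n, ξ, ξ̃ be random elements of 𝕏 and a_n > 0 be positive reals. Suppose ξ_n → ξ in distribution and T_{a_n}(ξ_n) → ξ̃ in distribution, and that both ξ and ξ̃ are non-zero. Then there exists a > 0 such that a_n → a and ξ̃ has the same distribution as T_a(ξ). -/
/-!
Extend the action to all `c ∈ ℝ` by letting `T c` be the constant map to the base point `z` for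
`c ≤ 0`. Radial monotonicity makes `(c, x) ↦ T c x` jointly continuous, so `(c, μ) ↦ (T c)₊μ`, the
push-forward of `δ_c ⊗ μ`, is weakly continuous. Hence every subsequential limit `c` of `(a n)`
satisfies `law ξ̃ = (T c)₊(law ξ)`, and `c ≤ 0` would make `ξ̃` zero. A subsequence `a n → ∞` is
excluded in the same way, applying `T (a n)⁻¹` to `T (a n) (ξ n)`, which would make `ξ` zero.
Finally `(T b)₊μ = (T c)₊μ` with `b < c` forces `μ = δ_z`: `dist (T b x) z ≤ dist (T c x) z`, with
equality only at `x = z`, and the two sides have the same law. So all subsequential limits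
coincide.
-/

open MeasureTheory Filter Topology

/-- A scaling action on a metric space `𝕏` with distinguished point `z`:
a family `T a : 𝕏 → 𝕏`, `a ∈ (0,∞)`, which is a multiplicative group action (i),(ii),
jointly (sequentially) continuous (iii), radially monotone (iv), and such that
`dist (T a x) z → 0` as `a → 0⁺` (v). -/
structure ScalingAction (𝕏 : Type*) [MetricSpace 𝕏] (z : 𝕏) where
  T : ℝ → 𝕏 → 𝕏
  comp : ∀ ⦃a b : ℝ⦄, 0 < a → 0 < b → ∀ x, T a (T b x) = T (a * b) x
  one_eq : ∀ x, T 1 x = x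
  map_zero : ∀ ⦃a : ℝ⦄, 0 < a → T a z = z
  cont : ∀ ⦃a : ℝ⦄, 0 < a → ∀ (x : 𝕏) (an : ℕ → ℝ) (xn : ℕ → 𝕏),
    Tendsto an atTop (𝓝 a) → Tendsto xn atTop (𝓝 x) →
      Tendsto (fun n => T (an n) (xn n)) atTop (𝓝 (T a x))
  mono : ∀ ⦃a b : ℝ⦄, 0 < a → a < b → ∀ ⦃x : 𝕏⦄, x ≠ z →
    dist (T a x) z < dist (T b x) z
  tendsto_zero : ∀ x : 𝕏, Tendsto (fun a => T a x) (𝓝[>] (0 : ℝ)) (𝓝 z)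

/-- The random elements `ξ n` converge in distribution to the (probability) measure `μ`:
the laws `P.map (ξ n)` converge weakly to `μ`, tested against bounded continuous functions. -/
def TendstoInDistribution {Ω 𝕏 : Type*} [MeasurableSpace Ω] [MeasurableSpace 𝕏]
    [TopologicalSpace 𝕏] (P : Measure Ω) (ξ : ℕ → Ω → 𝕏) (μ : Measure 𝕏) : Prop :=
  ∀ f : BoundedContinuousFunction 𝕏 ℝ,
    Tendsto (fun n => ∫ x, f x ∂(P.map (ξ n))) atTop (𝓝 (∫ x, f x ∂μ))

theorem exists_subseq_tendsto_or_tendsto_abs_atTop (u : ℕ → ℝ) :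
    (∃ (c : ℝ) (φ : ℕ → ℕ), StrictMono φ ∧ Tendsto (u ∘ φ) atTop (𝓝 c)) ∨
      Tendsto (fun n => |u n|) atTop atTop := by
  by_cases h : ∃ M, ∃ᶠ n in atTop, |u n| ≤ M
  · obtain ⟨M, hM⟩ := h
    obtain ⟨c, -, φ, hφ, hc⟩ := tendsto_subseq_of_frequently_bounded
      (Metric.isBounded_closedBall (x := (0 : ℝ)) (r := M)) (hM.mono fun n hn => by simpa using hn)
    exact Or.inl ⟨c, φ, hφ, hc⟩
  · push Not at h
    exact Or.inr (tendsto_atTop.mpr fun M => (h M).mono fun n hn => hn.le)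

theorem MeasureTheory.ae_eq_of_le_of_map_eq {α : Type*} [MeasurableSpace α] {μ : Measure α}
    [IsFiniteMeasure μ] {f g : α → ℝ} (hf : AEMeasurable f μ) (hg : AEMeasurable g μ) (hfg : f ≤ᵐ[μ] g)
    (h : μ.map f = μ.map g) : f =ᵐ[μ] g := by
  -- compare the integrals of the bounded, strictly increasing `arctan`
  have hint : ∀ {u : α → ℝ}, AEMeasurable u μ → Integrable (fun x => Real.arctan (u x)) μ :=
    fun hu => .of_bound (Real.measurable_arctan.comp_aemeasurable hu).aestronglyMeasurable
      (Real.pi / 2) (ae_of_all _ fun x => abs_le.mpr ⟨(Real.neg_pi_div_two_lt_arctan _).le,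
        (Real.arctan_lt_pi_div_two _).le⟩)
  have hmono : (fun x => Real.arctan (f x)) ≤ᵐ[μ] fun x => Real.arctan (g x) :=
    hfg.mono fun x hx => Real.arctan_mono hx
  have heq : ∫ x, Real.arctan (f x) ∂μ = ∫ x, Real.arctan (g x) ∂μ := by
    rw [← integral_map hf Real.continuous_arctan.aestronglyMeasurable, h,
      integral_map hg Real.continuous_arctan.aestronglyMeasurable]
  filter_upwards [(integral_eq_iff_of_ae_le (hint hf) (hint hg) hmono).mp heq] with x hx
  exact Real.arctan_injective hx

theorem MeasureTheory.Measure.map_ne_dirac_of_measure_lt_one {Ω X : Type*} [MeasurableSpace Ω]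
    [MeasurableSpace X] [MeasurableSingletonClass X] {P : Measure Ω} {f : Ω → X}
    (hf : Measurable f) {x : X} (h : P {ω | f ω = x} < 1) : P.map f ≠ Measure.dirac x := by
  intro hfx
  have := congrArg (· {x}) hfx
  simp only [Measure.map_apply hf (measurableSet_singleton x), Measure.dirac_apply_of_mem
    (Set.mem_singleton x)] at this
  exact h.ne this

namespace ScalingAction

variable {𝕏 : Type*} [MetricSpace 𝕏] {z : 𝕏} (S : ScalingAction 𝕏 z)

theorem continuousAt_uncurry {a : ℝ} (ha : 0 < a) (x : 𝕏) :
    ContinuousAt (fun p : ℝ × 𝕏 => S.T p.1 p.2) (a, x) :=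
  tendsto_iff_seq_tendsto.mpr fun _ hu =>
    S.cont ha x _ _ ((continuous_fst.tendsto _).comp hu) ((continuous_snd.tendsto _).comp hu)

theorem continuous_T {a : ℝ} (ha : 0 < a) : Continuous (S.T a) :=
  continuous_iff_continuousAt.mpr fun x =>
    (S.continuousAt_uncurry ha x).comp (continuous_const.prodMk continuous_id).continuousAt

theorem dist_T_le {a b : ℝ} (ha : 0 < a) (hab : a ≤ b) (x : 𝕏) :
    dist (S.T a x) z ≤ dist (S.T b x) z := by
  rcases eq_or_ne x z with rfl | hx
  · rw [S.map_zero ha, S.map_zero (ha.trans_le hab)]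
  rcases hab.eq_or_lt with rfl | hab
  · rfl
  · exact (S.mono ha hab hx).le

theorem T_inv_T {a : ℝ} (ha : 0 < a) (x : 𝕏) : S.T a⁻¹ (S.T a x) = x := by
  rw [S.comp (inv_pos.mpr ha) ha, inv_mul_cancel₀ ha.ne', S.one_eq]

noncomputable def extend (c : ℝ) (x : 𝕏) : 𝕏 := if 0 < c then S.T c x else z

theorem extend_of_pos {c : ℝ} (hc : 0 < c) : S.extend c = S.T c := by
  ext x
  simp [extend, hc]

theorem extend_of_nonpos {c : ℝ} (hc : c ≤ 0) : S.extend c = fun _ => z := by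
  ext x
  simp [extend, hc.not_gt]

/-- Radial monotonicity upgrades the pointwise limit `T c x → z` as `c → 0⁺` to a locally uniform
one. -/
theorem tendsto_extend_nhds_zero (x : 𝕏) :
    Tendsto (Function.uncurry S.extend) (𝓝 (0, x)) (𝓝 z) := by
  refine Metric.tendsto_nhds.mpr fun ε hε => ?_
  obtain ⟨c₀, hc₀x, hc₀⟩ : ∃ c₀, dist (S.T c₀ x) z < ε ∧ 0 < c₀ :=
    (((S.tendsto_zero x).eventually (Metric.ball_mem_nhds z hε)).and
      self_mem_nhdsWithin).exists
  have hnear : ∀ᶠ y in 𝓝 x, dist (S.T c₀ y) z < ε :=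
    ((S.continuous_T hc₀).dist continuous_const).continuousAt.eventually_lt_const hc₀x
  filter_upwards [(eventually_lt_nhds hc₀).prod_nhds hnear] with ⟨c, y⟩ ⟨hc, hy⟩
  by_cases hc0 : 0 < c
  · simpa [extend, hc0] using (S.dist_T_le hc0 hc.le y).trans_lt hy
  · simpa [extend, hc0] using hε

theorem continuous_extend_uncurry : Continuous (Function.uncurry S.extend) := by
  refine continuous_iff_continuousAt.mpr fun ⟨c, x⟩ => ?_
  rcases lt_trichotomy c 0 with hc | rfl | hc
  · have : Function.uncurry S.extend =ᶠ[𝓝 (c, x)] fun _ => z := by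
      filter_upwards [(eventually_lt_nhds hc).prod_inl_nhds x] with p hp
      simp [Function.uncurry, S.extend_of_nonpos hp.le]
    exact continuousAt_const.congr this.symm
  · simpa [ContinuousAt, Function.uncurry, extend] using S.tendsto_extend_nhds_zero x
  · have : (fun p : ℝ × 𝕏 => S.T p.1 p.2) =ᶠ[𝓝 (c, x)] Function.uncurry S.extend := by
      filter_upwards [(eventually_gt_nhds hc).prod_inl_nhds x] with p hp
      simp [Function.uncurry, S.extend_of_pos hp]
    exact (S.continuousAt_uncurry hc x).congr this

theorem continuous_extend (c : ℝ) : Continuous (S.extend c) :=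
  S.continuous_extend_uncurry.comp (continuous_const.prodMk continuous_id)

section Measure

variable [MeasurableSpace 𝕏] [BorelSpace 𝕏]

theorem eq_dirac_of_map_T_eq (μ : Measure 𝕏) [IsProbabilityMeasure μ] {b c : ℝ} (hb : 0 < b)
    (hbc : b < c) (h : μ.map (S.T b) = μ.map (S.T c)) : μ = Measure.dirac z := by
  have hc := hb.trans hbc
  have hd : Measurable fun y : 𝕏 => dist y z := (continuous_id.dist continuous_const).measurable
  have hdist : (fun x => dist (S.T b x) z) =ᵐ[μ] fun x => dist (S.T c x) z := by
    refine ae_eq_of_le_of_map_eq (hd.comp (S.continuous_T hb).measurable).aemeasurable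
      (hd.comp (S.continuous_T hc).measurable).aemeasurable
      (ae_of_all _ (S.dist_T_le hb hbc.le)) ?_
    simpa only [Measure.map_map hd (S.continuous_T hb).measurable,
      Measure.map_map hd (S.continuous_T hc).measurable, Function.comp_def] using
      congrArg (Measure.map fun y => dist y z) h
  have hz : id =ᵐ[μ] fun _ => z := by
    filter_upwards [hdist] with x hx
    by_contra hxz
    exact (S.mono hb hbc hxz).ne hx
  rw [← Measure.map_id (μ := μ), Measure.map_congr hz, Measure.map_const, measure_univ, one_smul]

noncomputable def scaleMeasure (c : ℝ) (μ : ProbabilityMeasure 𝕏) : ProbabilityMeasure 𝕏 :=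
  μ.map (S.continuous_extend c).measurable.aemeasurable

@[simp]
theorem toMeasure_scaleMeasure (c : ℝ) (μ : ProbabilityMeasure 𝕏) :
    (S.scaleMeasure c μ : Measure 𝕏) = (μ : Measure 𝕏).map (S.extend c) :=
  rfl

theorem scaleMeasure_of_nonpos {c : ℝ} (hc : c ≤ 0) (μ : ProbabilityMeasure 𝕏) :
    (S.scaleMeasure c μ : Measure 𝕏) = Measure.dirac z := by
  rw [toMeasure_scaleMeasure, S.extend_of_nonpos hc, Measure.map_const, measure_univ, one_smul]

theorem scaleMeasure_inv_scaleMeasure {c : ℝ} (hc : 0 < c) (μ : ProbabilityMeasure 𝕏) :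
    S.scaleMeasure c⁻¹ (S.scaleMeasure c μ) = μ := by
  apply ProbabilityMeasure.toMeasure_injective
  rw [toMeasure_scaleMeasure, toMeasure_scaleMeasure, Measure.map_map
    (S.continuous_extend _).measurable (S.continuous_extend _).measurable,
    S.extend_of_pos hc, S.extend_of_pos (inv_pos.mpr hc)]
  simp [Function.comp_def, S.T_inv_T hc]

theorem eq_of_scaleMeasure_eq {μ : ProbabilityMeasure 𝕏} (hμ : (μ : Measure 𝕏) ≠ Measure.dirac z)
    {b c : ℝ} (hb : 0 < b) (hc : 0 < c) (h : S.scaleMeasure b μ = S.scaleMeasure c μ) : b = c := by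
  have hT : (μ : Measure 𝕏).map (S.T b) = (μ : Measure 𝕏).map (S.T c) := by
    simpa only [toMeasure_scaleMeasure, S.extend_of_pos hb, S.extend_of_pos hc] using
      congrArg ProbabilityMeasure.toMeasure h
  rcases lt_trichotomy b c with hbc | hbc | hbc
  · exact absurd (S.eq_dirac_of_map_T_eq μ hb hbc hT) hμ
  · exact hbc
  · exact absurd (S.eq_dirac_of_map_T_eq μ hc hbc hT.symm) hμ

variable [TopologicalSpace.SeparableSpace 𝕏]

theorem continuous_scaleMeasure :
    Continuous fun p : ℝ × ProbabilityMeasure 𝕏 => S.scaleMeasure p.1 p.2 := by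
  have hF := S.continuous_extend_uncurry
  have : (fun p : ℝ × ProbabilityMeasure 𝕏 => S.scaleMeasure p.1 p.2) =
      fun p => ((diracProba p.1).prod p.2).map hF.measurable.aemeasurable := by
    funext ⟨c, μ⟩
    apply ProbabilityMeasure.toMeasure_injective
    change (μ : Measure 𝕏).map (S.extend c) = ((Measure.dirac c).prod (μ : Measure 𝕏)).map _
    rw [Measure.dirac_prod, Measure.map_map hF.measurable measurable_prodMk_left]
    rfl
  rw [this]
  exact (ProbabilityMeasure.continuous_map hF).comp
    (ProbabilityMeasure.continuous_prod.comp (continuous_diracProba.prodMap continuous_id))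

theorem eq_scaleMeasure_of_tendsto {ι : Type*} {L : Filter ι} [L.NeBot]
    {μ : ι → ProbabilityMeasure 𝕏} {μ₀ ν : ProbabilityMeasure 𝕏} {c : ι → ℝ} {c₀ : ℝ}
    (hμ : Tendsto μ L (𝓝 μ₀)) (hc : Tendsto c L (𝓝 c₀))
    (hν : Tendsto (fun i => S.scaleMeasure (c i) (μ i)) L (𝓝 ν)) :
    ν = S.scaleMeasure c₀ μ₀ :=
  tendsto_nhds_unique hν <|
    (S.continuous_scaleMeasure.tendsto (c₀, μ₀)).comp (hc.prodMk_nhds hμ)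

theorem eq_dirac_of_tendsto_atTop {ι : Type*} {L : Filter ι} [L.NeBot]
    {μ : ι → ProbabilityMeasure 𝕏} {μ₀ ν : ProbabilityMeasure 𝕏} {c : ι → ℝ} (hc : ∀ i, 0 < c i)
    (hμ : Tendsto μ L (𝓝 μ₀)) (hν : Tendsto (fun i => S.scaleMeasure (c i) (μ i)) L (𝓝 ν))
    (hc_top : Tendsto c L atTop) :
    (μ₀ : Measure 𝕏) = Measure.dirac z := by
  have hμ' :
      Tendsto (fun i => S.scaleMeasure (c i)⁻¹ (S.scaleMeasure (c i) (μ i))) L (𝓝 μ₀) := by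
    simpa only [S.scaleMeasure_inv_scaleMeasure (hc _)] using hμ
  rw [S.eq_scaleMeasure_of_tendsto hν (tendsto_inv_atTop_zero.comp hc_top) hμ',
    S.scaleMeasure_of_nonpos le_rfl]

theorem convergence_to_types {μ : ℕ → ProbabilityMeasure 𝕏} {μ₀ ν : ProbabilityMeasure 𝕏}
    {a : ℕ → ℝ} (ha : ∀ n, 0 < a n) (hμ : Tendsto μ atTop (𝓝 μ₀))
    (hν : Tendsto (fun n => S.scaleMeasure (a n) (μ n)) atTop (𝓝 ν))
    (hμ₀ : (μ₀ : Measure 𝕏) ≠ Measure.dirac z) (hν₀ : (ν : Measure 𝕏) ≠ Measure.dirac z) :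
    ∃ a₀, 0 < a₀ ∧ Tendsto a atTop (𝓝 a₀) ∧ ν = S.scaleMeasure a₀ μ₀ := by
  have hlim : ∀ φ : ℕ → ℕ, Tendsto φ atTop atTop → ∀ c, Tendsto (a ∘ φ) atTop (𝓝 c) →
      0 < c ∧ ν = S.scaleMeasure c μ₀ := by
    intro φ hφ c hc
    have hνc := S.eq_scaleMeasure_of_tendsto (hμ.comp hφ) hc (hν.comp hφ)
    refine ⟨lt_of_not_ge fun hc0 => hν₀ ?_, hνc⟩
    rw [hνc, S.scaleMeasure_of_nonpos hc0]
  have hsub : ∀ φ : ℕ → ℕ, Tendsto φ atTop atTop →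
      ∃ (c : ℝ) (ψ : ℕ → ℕ), StrictMono ψ ∧ Tendsto (a ∘ φ ∘ ψ) atTop (𝓝 c) := by
    intro φ hφ
    refine (exists_subseq_tendsto_or_tendsto_abs_atTop (a ∘ φ)).resolve_right fun htop => hμ₀ ?_
    exact S.eq_dirac_of_tendsto_atTop (fun n => ha _) (hμ.comp hφ) (hν.comp hφ)
      (htop.congr fun n => abs_of_pos (ha _))
  obtain ⟨a₀, ψ, hψ, ha₀⟩ := hsub id tendsto_id
  obtain ⟨ha₀pos, hνa₀⟩ := hlim ψ hψ.tendsto_atTop a₀ ha₀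
  refine ⟨a₀, ha₀pos, tendsto_of_subseq_tendsto fun φ hφ => ?_, hνa₀⟩
  obtain ⟨c, ψ, hψ, hc⟩ := hsub φ hφ
  obtain ⟨hcpos, hνc⟩ := hlim (φ ∘ ψ) (hφ.comp hψ.tendsto_atTop) c hc
  exact ⟨ψ, S.eq_of_scaleMeasure_eq hμ₀ hcpos ha₀pos (hνc.symm.trans hνa₀) ▸ hc⟩

end Measure

end ScalingAction

theorem scalingAction_convergence_to_types_general {𝕏 : Type*} [MetricSpace 𝕏]
    [TopologicalSpace.SeparableSpace 𝕏] [MeasurableSpace 𝕏] [BorelSpace 𝕏]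
    (z : 𝕏) (S : ScalingAction 𝕏 z)
    {Ω : Type*} [MeasurableSpace Ω] (P : Measure Ω) [IsProbabilityMeasure P]
    (ξn : ℕ → Ω → 𝕏) (ξ ξt : Ω → 𝕏)
    (hξn : ∀ n, Measurable (ξn n)) (hξ : Measurable ξ) (hξt : Measurable ξt)
    (a : ℕ → ℝ) (ha : ∀ n, 0 < a n)
    (h1 : TendstoInDistribution P ξn (P.map ξ))
    (h2 : TendstoInDistribution P (fun n ω => S.T (a n) (ξn n ω)) (P.map ξt))
    (hz1 : P {ω | ξ ω = z} < 1) (hz2 : P {ω | ξt ω = z} < 1) :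
    ∃ a₀ : ℝ, 0 < a₀ ∧ Tendsto a atTop (𝓝 a₀) ∧
      P.map ξt = P.map (fun ω => S.T a₀ (ξ ω)) := by
  set P' : ProbabilityMeasure Ω := ⟨P, inferInstance⟩
  have hP' : (P' : Measure Ω) = P := rfl
  have hlaw : ∀ n, (P.map (ξn n)).map (S.extend (a n)) = P.map fun ω => S.T (a n) (ξn n ω) :=
    fun n => by
      rw [Measure.map_map (S.continuous_extend _).measurable (hξn n), S.extend_of_pos (ha n)]
      rfl
  obtain ⟨a₀, ha₀, ha_lim, hν⟩ := S.convergence_to_types ha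
    (μ := fun n => P'.map (hξn n).aemeasurable) (μ₀ := P'.map hξ.aemeasurable)
    (ν := P'.map hξt.aemeasurable) (ProbabilityMeasure.tendsto_iff_forall_integral_tendsto.mpr h1)
    (ProbabilityMeasure.tendsto_iff_forall_integral_tendsto.mpr fun f => by
      simpa only [ScalingAction.toMeasure_scaleMeasure, ProbabilityMeasure.toMeasure_map, hP',
        hlaw] using h2 f)
    (Measure.map_ne_dirac_of_measure_lt_one hξ hz1)
    (Measure.map_ne_dirac_of_measure_lt_one hξt hz2)
  refine ⟨a₀, ha₀, ha_lim, ?_⟩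
  rw [← Function.comp_def, ← Measure.map_map (S.continuous_T ha₀).measurable hξ,
    ← S.extend_of_pos ha₀]
  exact congrArg ProbabilityMeasure.toMeasure hν

/-- Convergence to types for scaling actions: if `ξ n → ξ` in distribution and
`T (a n) (ξ n) → ξ̃` in distribution, with both `ξ` and `ξ̃` non-zero, then `a n → a`
for some `a > 0` and `ξ̃` has the same law as `T a ξ`. -/
theorem scalingAction_convergence_to_types {𝕏 : Type*} [MetricSpace 𝕏] [CompleteSpace 𝕏]
    [TopologicalSpace.SeparableSpace 𝕏] [MeasurableSpace 𝕏] [BorelSpace 𝕏]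
    (z : 𝕏) (S : ScalingAction 𝕏 z)
    {Ω : Type*} [MeasurableSpace Ω] (P : Measure Ω) [IsProbabilityMeasure P]
    (ξn : ℕ → Ω → 𝕏) (ξ ξt : Ω → 𝕏)
    (hξn : ∀ n, Measurable (ξn n)) (hξ : Measurable ξ) (hξt : Measurable ξt)
    (a : ℕ → ℝ) (ha : ∀ n, 0 < a n)
    (h1 : TendstoInDistribution P ξn (P.map ξ))
    (h2 : TendstoInDistribution P (fun n ω => S.T (a n) (ξn n ω)) (P.map ξt))
    (hz1 : P {ω | ξ ω = z} < 1) (hz2 : P {ω | ξt ω = z} < 1) :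
    ∃ a₀ : ℝ, 0 < a₀ ∧ Tendsto a atTop (𝓝 a₀) ∧
      P.map ξt = P.map (fun ω => S.T a₀ (ξ ω)) :=
  scalingAction_convergence_to_types_general z S P ξn ξ ξt hξn hξ hξt a ha h1 h2 hz1 hz2
end

section
/- Let (𝕏, d) be a complete separable metric space with a distinguished point 0, equipped with a scaling action (T_a)_{a>0}. Let ξ be a non-zero random element of 𝕏 and a_n > 0 positive reals. If T_{a_n}(ξ) converges in distribution to the constant 0 (i.e., the laws of T_{a_n}(ξ) converge weakly to the Dirac measure at 0), then a_n → 0. -/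
open MeasureTheory Filter Topology

/-!
If `a n ≥ ε` infinitely often, radial monotonicity gives `d(T_{a n} ξ, 0) ≥ d(T_ε ξ, 0)`
pointwise along those `n`, so the expectations of the bounded continuous function
`min (d(·, 0)) 1` under the laws of `T_{a n} ξ` stay above `E[min (d(T_ε ξ, 0)) 1]`. This is
positive because `ξ ≠ 0` with positive probability and `T_ε x = 0` forces `x = T_{1/ε} 0 = 0`,
whereas these expectations converge to the value `0` at the Dirac limit.
-/

namespace ScalingAction

variable {𝕏 : Type*} [MetricSpace 𝕏] {z : 𝕏} (S : ScalingAction 𝕏 z)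

theorem continuous_T_s6 {c : ℝ} (hc : 0 < c) : Continuous (S.T c) :=
  SeqContinuous.continuous fun _ x hx => S.cont hc x (fun _ => c) _ tendsto_const_nhds hx

theorem T_eq_iff_eq {c : ℝ} (hc : 0 < c) {x : 𝕏} : S.T c x = z ↔ x = z := by
  refine ⟨fun hx => ?_, fun hx => hx ▸ S.map_zero hc⟩
  calc x = S.T c⁻¹ (S.T c x) := by
        rw [S.comp (inv_pos.2 hc) hc, inv_mul_cancel₀ hc.ne', S.one_eq]
    _ = z := by rw [hx, S.map_zero (inv_pos.2 hc)]

theorem dist_T_le_dist_T {c b : ℝ} (hc : 0 < c) (hcb : c ≤ b) (x : 𝕏) :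
    dist (S.T c x) z ≤ dist (S.T b x) z := by
  rcases hcb.eq_or_lt with rfl | hlt
  · rfl
  by_cases hx : x = z
  · rw [hx, S.map_zero hc, S.map_zero (hc.trans hlt)]
  · exact (S.mono hc hlt hx).le

end ScalingAction

section TruncatedDist

variable {𝕏 : Type*} {Ω : Type*} [MeasurableSpace Ω]

theorem min_dist_one_mem_Icc [PseudoMetricSpace 𝕏] (x z : 𝕏) :
    min (dist x z) 1 ∈ Set.Icc (0 : ℝ) 1 :=
  ⟨le_min dist_nonneg zero_le_one, min_le_right _ _⟩

noncomputable def truncatedDist [PseudoMetricSpace 𝕏] (z : 𝕏) :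
    BoundedContinuousFunction 𝕏 ℝ :=
  .mkOfBound ⟨fun x => min (dist x z) 1, by fun_prop⟩ 1 fun x y =>
    Real.dist_le_of_mem_Icc_01 (min_dist_one_mem_Icc x z) (min_dist_one_mem_Icc y z)

@[simp]
theorem truncatedDist_apply [PseudoMetricSpace 𝕏] (z x : 𝕏) :
    truncatedDist z x = min (dist x z) 1 :=
  rfl

theorem integrable_truncatedDist_comp [PseudoMetricSpace 𝕏] [MeasurableSpace 𝕏]
    [OpensMeasurableSpace 𝕏] (P : Measure Ω) [IsFiniteMeasure P] (z : 𝕏) {Y : Ω → 𝕏}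
    (hY : Measurable Y) : Integrable (fun ω => truncatedDist z (Y ω)) P :=
  ((truncatedDist z).integrable (P.map Y)).comp_measurable hY

theorem truncatedDist_eq_zero_iff [MetricSpace 𝕏] {z x : 𝕏} :
    truncatedDist z x = 0 ↔ x = z := by
  rw [truncatedDist_apply, min_eq_iff, dist_eq_zero]
  constructor
  · rintro (⟨h, -⟩ | ⟨h, -⟩)
    exacts [h, absurd h one_ne_zero]
  · exact fun h => Or.inl ⟨h, by rw [h, dist_self]; exact zero_le_one⟩

theorem integral_truncatedDist_comp_pos [MetricSpace 𝕏] [MeasurableSpace 𝕏]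
    [OpensMeasurableSpace 𝕏] (P : Measure Ω) [IsFiniteMeasure P] {z : 𝕏} {Y : Ω → 𝕏}
    (hY : Measurable Y) (hYz : 0 < P {ω | Y ω ≠ z}) :
    0 < ∫ ω, truncatedDist z (Y ω) ∂P := by
  rw [integral_pos_iff_support_of_nonneg (f := fun ω => truncatedDist z (Y ω))
    (fun ω => (min_dist_one_mem_Icc (Y ω) z).1) (integrable_truncatedDist_comp P z hY)]
  convert hYz using 2
  ext ω
  exact not_congr truncatedDist_eq_zero_iff

end TruncatedDist

theorem scalingAction_tendsto_dirac_imp_scale_tendsto_zero_general {𝕏 : Type*} [MetricSpace 𝕏]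
    [MeasurableSpace 𝕏] [BorelSpace 𝕏]
    (z : 𝕏) (S : ScalingAction 𝕏 z)
    {Ω : Type*} [MeasurableSpace Ω] (P : Measure Ω) [IsProbabilityMeasure P]
    (ξ : Ω → 𝕏) (hξ : Measurable ξ) (hnz : P {ω | ξ ω = z} < 1)
    (a : ℕ → ℝ) (ha : ∀ n, 0 < a n)
    (h : TendstoInDistribution P (fun n ω => S.T (a n) (ξ ω)) (Measure.dirac z)) :
    Tendsto a atTop (𝓝 0) := by
  have hT : ∀ {c : ℝ}, 0 < c → Measurable fun ω => S.T c (ξ ω) :=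
    fun hc => (S.continuous_T_s6 hc).measurable.comp hξ
  have hlim :
      Tendsto (fun n => ∫ ω, truncatedDist z (S.T (a n) (ξ ω)) ∂P) atTop (𝓝 0) := by
    have := h (truncatedDist z)
    rw [integral_dirac, truncatedDist_apply, dist_self, min_eq_left zero_le_one] at this
    exact this.congr fun n =>
      integral_map (hT (ha n)).aemeasurable (truncatedDist z).continuous.aestronglyMeasurable
  refine tendsto_order.2 ⟨fun b hb => .of_forall fun n => hb.trans (ha n), fun ε hε => ?_⟩
  have hξz : 0 < P {ω | S.T ε (ξ ω) ≠ z} := by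
    simp only [S.T_eq_iff_eq hε, ← Set.compl_ofPred]
    rw [prob_compl_eq_one_sub (s := {ω | ξ ω = z}) (hξ (measurableSet_singleton z))]
    exact tsub_pos_of_lt hnz
  have hpos := integral_truncatedDist_comp_pos P (hT hε) hξz
  filter_upwards [hlim.eventually (gt_mem_nhds hpos)] with n hn
  by_contra! hle
  refine hn.not_ge (integral_mono (integrable_truncatedDist_comp P z (hT hε))
    (integrable_truncatedDist_comp P z (hT (ha n))) fun ω => ?_)
  exact min_le_min_right 1 (S.dist_T_le_dist_T hε hle (ξ ω))

/-- If `ξ` is a non-zero random element and `T (a n) ξ` converges in distribution to the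
Dirac measure at the distinguished point `z`, then `a n → 0`. -/
theorem scalingAction_tendsto_dirac_imp_scale_tendsto_zero {𝕏 : Type*} [MetricSpace 𝕏]
    [CompleteSpace 𝕏] [TopologicalSpace.SeparableSpace 𝕏] [MeasurableSpace 𝕏] [BorelSpace 𝕏]
    (z : 𝕏) (S : ScalingAction 𝕏 z)
    {Ω : Type*} [MeasurableSpace Ω] (P : Measure Ω) [IsProbabilityMeasure P]
    (ξ : Ω → 𝕏) (hξ : Measurable ξ) (hnz : P {ω | ξ ω = z} < 1)
    (a : ℕ → ℝ) (ha : ∀ n, 0 < a n)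
    (h : TendstoInDistribution P (fun n ω => S.T (a n) (ξ ω)) (Measure.dirac z)) :
    Tendsto a atTop (𝓝 0) :=
  scalingAction_tendsto_dirac_imp_scale_tendsto_zero_general z S P ξ hξ hnz a ha h
end
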